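/- arXiv:2502.05421 — 2 statements merged into one kernel-verified Lean document; each statement's English description precedes it below -/
import Mathlib

section
/- Let α be an algebraic number that is a q-Weil number of weight w (i.e., every complex embedding of α has absolute value q^{w/2}), where q = p^r is a prime power, and suppose α is a unit at every finite place not lying above p (i.e., α and its conjugates are units away from p). If every q-slope of α (the value v_q(ι(α)) for each embedding ι : ℚ(α) → ℂ_p, where v_q is normalized by v_q(q)=1) lies in the interval [a,b], then w ∈ [2a, 2b]. -/
/-!
Let `N ∈ ℚ` be the norm of `α` and `n = [E : ℚ]`. The Weil condition gives `|N| = q^{nw/2}`,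
so `N² = p^{rnw}`: the rational number `N` is a unit away from `p`, and `v_p(N) = rnw/2`.
On the other hand `v(N) = ∑ v(ι α)` over the `n` embeddings
`ι : E → ℚ̄_p`, each term lying in `[ra, rb]`. Hence `w/2`, the mean `q`-slope, lies in `[a, b]`.
-/

open Module

theorem padicValRat_eq_of_abs_eq_rpow {p : ℕ} [Fact p.Prime] {x : ℚ} {e : ℤ}
    (h : |(x : ℝ)| = (p : ℝ) ^ ((e : ℝ) / 2)) : (padicValRat p x : ℝ) = e / 2 := by
  have hsq : x ^ 2 = (p : ℚ) ^ e := by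
    have : ((x ^ 2 : ℚ) : ℝ) = (((p : ℚ) ^ e : ℚ) : ℝ) := by
      rw [Rat.cast_pow, ← sq_abs, h, ← Real.rpow_natCast, ← Real.rpow_mul (Nat.cast_nonneg p)]
      push_cast
      rw [div_mul_cancel₀ _ two_ne_zero, Real.rpow_intCast]
    exact_mod_cast this
  have hval := congrArg (padicValRat p) hsq
  rw [padicValRat.pow, padicValRat.zpow, padicValRat.self (Fact.out : p.Prime).one_lt] at hval
  push_cast at hval
  rw [eq_div_iff two_ne_zero]
  exact_mod_cast (by linarith : padicValRat p x * 2 = e)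

theorem abs_norm_eq_pow_finrank_of_forall_norm_eq {E : Type*} [Field E] [Algebra ℚ E]
    [FiniteDimensional ℚ E] {α : E} {c : ℝ} (h : ∀ σ : E →ₐ[ℚ] ℂ, ‖σ α‖ = c) :
    |(Algebra.norm ℚ α : ℝ)| = c ^ finrank ℚ E := by
  have hprod := congrArg norm (Algebra.norm_eq_prod_embeddings ℚ ℂ α)
  rwa [eq_ratCast, Complex.norm_ratCast, norm_prod, Finset.prod_congr rfl fun σ _ => h σ,
    Finset.prod_const, Finset.card_univ, AlgHom.card] at hprod

theorem map_prod_of_map_mul {K M ι : Type*} [CommMonoidWithZero K] [NoZeroDivisors K]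
    [Nontrivial K] [AddCommGroup M] {v : K → M}
    (hv : ∀ x y : K, x ≠ 0 → y ≠ 0 → v (x * y) = v x + v y)
    (s : Finset ι) {f : ι → K} (hf : ∀ i ∈ s, f i ≠ 0) :
    v (∏ i ∈ s, f i) = ∑ i ∈ s, v (f i) := by
  induction s using Finset.cons_induction with
  | empty => simpa using hv 1 1 one_ne_zero one_ne_zero
  | cons i s his ih =>
    rw [Finset.forall_mem_cons] at hf
    rw [Finset.prod_cons, Finset.sum_cons, hv _ _ hf.1 (Finset.prod_ne_zero_iff.mpr hf.2), ih hf.2]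

theorem map_algebraMap_norm_eq_sum_embeddings {F E K M : Type*} [Field F] [Field E] [Field K]
    [Algebra F E] [FiniteDimensional F E] [Algebra.IsSeparable F E] [Algebra F K] [IsAlgClosed K]
    [AddCommGroup M] {v : K → M} (hv : ∀ x y : K, x ≠ 0 → y ≠ 0 → v (x * y) = v x + v y)
    {α : E} (hα : α ≠ 0) :
    v (algebraMap F K (Algebra.norm F α)) = ∑ σ : E →ₐ[F] K, v (σ α) := by
  rw [Algebra.norm_eq_prod_embeddings F K, map_prod_of_map_mul hv]
  exact fun σ _ => (map_ne_zero σ).mpr hα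

theorem mem_Icc_of_sum_eq_card_mul {ι K : Type*} [Field K] [LinearOrder K]
    [IsStrictOrderedRing K] {s : Finset ι} (hs : s.Nonempty) {f : ι → K} {a b c : K}
    (hf : ∀ i ∈ s, a ≤ f i ∧ f i ≤ b) (hsum : ∑ i ∈ s, f i = s.card * c) :
    a ≤ c ∧ c ≤ b := by
  have hcard : (0 : K) < s.card := by exact_mod_cast hs.card_pos
  have hlow := Finset.card_nsmul_le_sum s f a fun i hi => (hf i hi).1
  have hhigh := Finset.sum_le_card_nsmul s f b fun i hi => (hf i hi).2
  rw [hsum, nsmul_eq_mul] at hlow hhigh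
  exact ⟨le_of_mul_le_mul_left hlow hcard, le_of_mul_le_mul_left hhigh hcard⟩

theorem stmt_0_general (p : ℕ) [Fact p.Prime] (r : ℕ) (hr : 0 < r) (q : ℕ) (hq : q = p ^ r)
    {E : Type*} [Field E] [Algebra ℚ E] [FiniteDimensional ℚ E]
    (α : E) (w : ℤ)
    (hWeil : ∀ σ : E →+* ℂ, ‖σ α‖ = (q : ℝ) ^ ((w : ℝ) / 2))
    (v : AlgebraicClosure ℚ_[p] → ℝ)
    (hvmul : ∀ x y : AlgebraicClosure ℚ_[p], x ≠ 0 → y ≠ 0 → v (x * y) = v x + v y)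
    (hvp : ∀ x : ℚ_[p], x ≠ 0 →
      v (algebraMap ℚ_[p] (AlgebraicClosure ℚ_[p]) x) = (x.valuation : ℝ))
    (a b : ℝ)
    (hslope : ∀ ι : E →+* AlgebraicClosure ℚ_[p],
      a ≤ v (ι α) / (r : ℝ) ∧ v (ι α) / (r : ℝ) ≤ b) :
    2 * a ≤ (w : ℝ) ∧ (w : ℝ) ≤ 2 * b := by
  set N := Algebra.norm ℚ α
  have hN : |(N : ℝ)| = (p : ℝ) ^ (((r * w * finrank ℚ E : ℤ) : ℝ) / 2) := by
    rw [abs_norm_eq_pow_finrank_of_forall_norm_eq fun σ => hWeil σ, hq, Nat.cast_pow,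
      ← Real.rpow_natCast, ← Real.rpow_natCast, ← Real.rpow_mul (Nat.cast_nonneg p),
      ← Real.rpow_mul (Nat.cast_nonneg p)]
    push_cast
    ring_nf
  have hN0 : N ≠ 0 := by
    have hpos := Real.rpow_pos_of_pos (Nat.cast_pos.mpr (Fact.out : p.Prime).pos)
      (((r * w * finrank ℚ E : ℤ) : ℝ) / 2)
    exact_mod_cast abs_pos.mp (hN ▸ hpos)
  have hvN :
      v (algebraMap ℚ (AlgebraicClosure ℚ_[p]) N) = (r * w * finrank ℚ E : ℤ) / 2 := by
    rw [← padicValRat_eq_of_abs_eq_rpow hN, IsScalarTower.algebraMap_apply ℚ ℚ_[p],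
      hvp _ (by simpa using hN0), eq_ratCast, Padic.valuation_ratCast]
  have hsum : ∑ ι : E →ₐ[ℚ] AlgebraicClosure ℚ_[p], v (ι α) / r =
      (Finset.univ : Finset (E →ₐ[ℚ] AlgebraicClosure ℚ_[p])).card * ((w : ℝ) / 2) := by
    rw [← Finset.sum_div, ← map_algebraMap_norm_eq_sum_embeddings hvmul
      (Algebra.norm_ne_zero_iff.mp hN0), hvN, Finset.card_univ, AlgHom.card]
    push_cast
    field_simp
  have hnonempty : (Finset.univ : Finset (E →ₐ[ℚ] AlgebraicClosure ℚ_[p])).Nonempty := by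
    rw [← Finset.card_pos, Finset.card_univ, AlgHom.card]
    exact finrank_pos
  have hw := mem_Icc_of_sum_eq_card_mul hnonempty (fun ι _ => hslope ι.toRingHom) hsum
  constructor <;> linarith [hw.1, hw.2]

/-- Let `α` be an algebraic number, generating a number field `E`,
which is a `q`-Weil number of weight `w` (every complex embedding of `α` has absolute
value `q^{w/2}`), where `q = p^r` is a prime power.  Suppose `α` is a unit at every
finite place not lying above `p`, i.e. `α` is an algebraic integer and `p^m·α⁻¹` is an
algebraic integer for some `m`.  The `q`-slopes of `α` are the values `v(ι α)/r` for
embeddings `ι : E → ℚ̄_p`, where `v` is the unique valuation on the algebraic closure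
of `ℚ_p` extending the `p`-adic valuation normalized by `v(p) = 1` (so that
`v(q)/r = 1`).  If every `q`-slope of `α` lies in `[a, b]`, then `w ∈ [2a, 2b]`. -/
theorem stmt_0 (p : ℕ) [Fact p.Prime] (r : ℕ) (hr : 0 < r) (q : ℕ) (hq : q = p ^ r)
    {E : Type*} [Field E] [Algebra ℚ E] [FiniteDimensional ℚ E]
    (α : E) (hgen : Algebra.adjoin ℚ {α} = ⊤) (w : ℤ)
    (hWeil : ∀ σ : E →+* ℂ, ‖σ α‖ = (q : ℝ) ^ ((w : ℝ) / 2))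
    (hint : IsIntegral ℤ α)
    (hunit : ∃ m : ℕ, IsIntegral ℤ ((p : E) ^ m * α⁻¹))
    (v : AlgebraicClosure ℚ_[p] → ℝ)
    (hvmul : ∀ x y : AlgebraicClosure ℚ_[p], x ≠ 0 → y ≠ 0 → v (x * y) = v x + v y)
    (hvadd : ∀ x y : AlgebraicClosure ℚ_[p],
      x ≠ 0 → y ≠ 0 → x + y ≠ 0 → min (v x) (v y) ≤ v (x + y))
    (hvp : ∀ x : ℚ_[p], x ≠ 0 →
      v (algebraMap ℚ_[p] (AlgebraicClosure ℚ_[p]) x) = (x.valuation : ℝ))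
    (a b : ℝ)
    (hslope : ∀ ι : E →+* AlgebraicClosure ℚ_[p],
      a ≤ v (ι α) / (r : ℝ) ∧ v (ι α) / (r : ℝ) ≤ b) :
    2 * a ≤ (w : ℝ) ∧ (w : ℝ) ≤ 2 * b :=
  stmt_0_general p r hr q hq α w hWeil v hvmul hvp a b hslope
end

section
/- Let D be a triangulated category with a bounded t-structure with heart A. The constructions I ↦ D_I (sending an ascending chain of Serre subcategories I = (I^i) to the full subcategory of L with H^i L ∈ I^i for all i) and J ↦ (A ∩ J[i])_{i∈ℤ} are mutually inverse bijections between ascending chains of Serre subcategories of A and full subcategories J ⊆ D satisfying J ⊆ J[1], stable under extensions and compatible with the t-structure (i.e., stable under truncations and with A ∩ J[i] a Serre subcategory of A for all i). -/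
open CategoryTheory CategoryTheory.Limits CategoryTheory.Pretriangulated

/-- A Serre subcategory of an abelian category, given as a set of objects: it contains
the zero objects and is stable under subobjects, quotients and extensions. -/
def IsSerreSubcat {A : Type*} [Category A] [Abelian A] (S : Set A) : Prop :=
  (∀ X : A, IsZero X → X ∈ S) ∧
  (∀ ⦃X Y : A⦄ (f : X ⟶ Y), Mono f → Y ∈ S → X ∈ S) ∧
  (∀ ⦃X Y : A⦄ (f : X ⟶ Y), Epi f → X ∈ S → Y ∈ S) ∧
  (∀ S' : ShortComplex A, S'.ShortExact → S'.X₁ ∈ S → S'.X₃ ∈ S → S'.X₂ ∈ S)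

/-- An ascending chain of Serre subcategories of the heart `A`. -/
def IsGoodChain {A : Type*} [Category A] [Abelian A] (I : ℤ → Set A) : Prop :=
  (∀ i : ℤ, I i ⊆ I (i + 1)) ∧ (∀ i : ℤ, IsSerreSubcat (I i))

/-- `D_I`: the full subcategory of objects `L` with `H^i(L) = H(L⟦i⟧) ∈ I^i` for all `i`. -/
def DI {D : Type*} [Category D] [HasShift D ℤ] {A : Type*} [Category A]
    (H : D ⥤ A) (I : ℤ → Set A) : Set D :=
  {L : D | ∀ i : ℤ, H.obj (L⟦i⟧) ∈ I i}

/-- `A_J^{[i]} = A ∩ J[i]`: objects `X` of the heart `A` (embedded by `ι`) lying in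
`J[i]`, i.e. with `(ι X)⟦-i⟧ ∈ J`. -/
def AJ {D : Type*} [Category D] [HasShift D ℤ] {A : Type*} [Category A]
    (ι : A ⥤ D) (J : Set D) (i : ℤ) : Set A :=
  {X : A | (ι.obj X)⟦(-i : ℤ)⟧ ∈ J}

/-- A full (replete) subcategory `J ⊆ D` with `J ⊆ J[1]`, stable under extensions and
compatible with the t-structure: stable under the truncations, and with each
`A_J^{[i]} = A ∩ J[i]` a Serre subcategory of the heart `A`. -/
def IsGoodSub {D : Type*} [Category D] [Preadditive D] [HasZeroObject D] [HasShift D ℤ]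
    [∀ n : ℤ, (CategoryTheory.shiftFunctor D n).Additive] [Pretriangulated D]
    {A : Type*} [Category A] [Abelian A]
    (ι : A ⥤ D) (τle τge : ℤ → D ⥤ D) (J : Set D) : Prop :=
  (∀ ⦃X Y : D⦄, (X ≅ Y) → X ∈ J → Y ∈ J) ∧
  (∀ X : D, X ∈ J → X⟦(-1 : ℤ)⟧ ∈ J) ∧
  (∀ T : Triangle D, (T ∈ distTriang D) → T.obj₁ ∈ J → T.obj₃ ∈ J → T.obj₂ ∈ J) ∧
  (∀ (n : ℤ) (L : D), L ∈ J → (τle n).obj L ∈ J ∧ (τge n).obj L ∈ J) ∧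
  (∀ i : ℤ, IsSerreSubcat (AJ ι J i))


section SerreHelpers

open CategoryTheory CategoryTheory.Limits

variable {A : Type*} [Category A] [Abelian A]

lemma IsSerreSubcat.mem_of_iso {S : Set A} (hS : IsSerreSubcat S) {X Y : A} (e : X ≅ Y)
    (hY : Y ∈ S) : X ∈ S :=
  hS.2.1 e.hom inferInstance hY

lemma IsSerreSubcat.mem_of_isZero {S : Set A} (hS : IsSerreSubcat S) {X : A} (h : IsZero X) :
    X ∈ S := hS.1 X h

lemma IsSerreSubcat.mem_mid {S : Set A} (hS : IsSerreSubcat S) (Sc : ShortComplex A)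
    (hSc : Sc.Exact) (h1 : Sc.X₁ ∈ S) (h3 : Sc.X₃ ∈ S) : Sc.X₂ ∈ S := by
  have hcyc : Sc.cycles ∈ S := by
    have := hSc.epi_toCycles
    exact hS.2.2.1 Sc.toCycles this h1
  have hker : kernel Sc.g ∈ S := hS.2.1 Sc.cyclesIsoKernel.inv inferInstance hcyc
  have hcoim : Abelian.coimage Sc.g ∈ S :=
    hS.2.1 ((Abelian.coimageIsoImage Sc.g).hom ≫ Abelian.image.ι Sc.g) inferInstance h3
  have hses : (ShortComplex.mk (kernel.ι Sc.g) (Abelian.coimage.π Sc.g)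
      (cokernel.condition _)).ShortExact :=
    { exact := ShortComplex.exact_of_g_is_cokernel _ (cokernelIsCokernel _) }
  exact hS.2.2.2 (ShortComplex.mk (kernel.ι Sc.g) (Abelian.coimage.π Sc.g)
    (cokernel.condition _)) hses hker hcoim

end SerreHelpers

/-- Let `D` be a triangulated category with a bounded t-structure with
heart `A`, encoded by: the embedding `ι : A ⥤ D` of the heart, a homological functor
`H : D ⥤ A` (cohomology `H^i(L) = H(L⟦i⟧)`, only finitely many nonzero), and truncation
functors `τ^{≤n}`, `τ^{≥n}` fitting in distinguished triangles
`τ^{≤n}L → L → τ^{≥n+1}L → (τ^{≤n}L)[1]`, with `H ∘ ι ≅ 𝟭`, `H^i(ι X) = 0` for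
`i ≠ 0`, and the heart being exactly the objects with cohomology concentrated in
degree `0`.  Then the constructions `I ↦ D_I` and `J ↦ (A ∩ J[i])_{i∈ℤ}` are mutually
inverse bijections between ascending chains of Serre subcategories of `A` and full
subcategories `J ⊆ D` satisfying `J ⊆ J[1]`, stable under extensions and compatible
with the t-structure. -/
theorem stmt_4 {D : Type*} [Category D] [Preadditive D] [HasZeroObject D] [HasShift D ℤ]
    [∀ n : ℤ, (CategoryTheory.shiftFunctor D n).Additive] [Pretriangulated D]
    {A : Type*} [Category A] [Abelian A]
    (H : D ⥤ A) [H.IsHomological] (ι : A ⥤ D) [ι.Full] [ι.Faithful]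
    (τle τge : ℤ → D ⥤ D)
    (hιH : Nonempty (ι ⋙ H ≅ 𝟭 A))
    (hιz : ∀ i : ℤ, i ≠ 0 → ∀ X : A, IsZero (H.obj ((ι.obj X)⟦i⟧)))
    (hheart : ∀ L : D, (∀ i : ℤ, i ≠ 0 → IsZero (H.obj (L⟦i⟧))) →
      ∃ X : A, Nonempty (L ≅ ι.obj X))
    (hbdd : ∀ L : D, ∃ a b : ℤ, ∀ i : ℤ, (i < a ∨ b < i) → IsZero (H.obj (L⟦i⟧)))
    (hτle : ∀ (n i : ℤ) (L : D),
      (i ≤ n → Nonempty (H.obj (((τle n).obj L)⟦i⟧) ≅ H.obj (L⟦i⟧))) ∧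
      (n < i → IsZero (H.obj (((τle n).obj L)⟦i⟧))))
    (hτge : ∀ (n i : ℤ) (L : D),
      (n ≤ i → Nonempty (H.obj (((τge n).obj L)⟦i⟧) ≅ H.obj (L⟦i⟧))) ∧
      (i < n → IsZero (H.obj (((τge n).obj L)⟦i⟧))))
    (htri : ∀ (n : ℤ) (L : D), ∃ T : Triangle D, (T ∈ distTriang D) ∧
      T.obj₁ = (τle n).obj L ∧ T.obj₂ = L ∧ T.obj₃ = (τge (n + 1)).obj L) :
    (∀ I : ℤ → Set A, IsGoodChain I →
      IsGoodSub ι τle τge (DI H I) ∧ (∀ i : ℤ, AJ ι (DI H I) i = I i)) ∧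
    (∀ J : Set D, IsGoodSub ι τle τge J →
      IsGoodChain (AJ ι J) ∧ DI H (AJ ι J) = J) := by
  obtain ⟨eιH⟩ := hιH
  have Hsh : ∀ (L : D) (a b c : ℤ), a + b = c →
      Nonempty (H.obj ((L⟦a⟧)⟦b⟧) ≅ H.obj (L⟦c⟧)) :=
    fun L a b c h => ⟨H.mapIso ((shiftFunctorAdd' D a b c h).symm.app L)⟩
  have Hzero : ∀ L : D, Nonempty (H.obj (L⟦(0 : ℤ)⟧) ≅ H.obj L) :=
    fun L => ⟨H.mapIso ((shiftFunctorZero D ℤ).app L)⟩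
  constructor
  · intro I hI
    obtain ⟨hasc, hserre⟩ := hI
    have hmonoNat : ∀ (k : ℕ) (i : ℤ), I i ⊆ I (i + k) := by
      intro k
      induction k with
      | zero =>
        intro i X hX
        have h0 : i + ((0 : ℕ) : ℤ) = i := by push_cast; ring
        rwa [h0]
      | succ n ih =>
        intro i X hX
        have h2 : X ∈ I ((i + (n : ℤ)) + 1) := hasc (i + n) (ih i hX)
        have he : ((i + (n : ℤ)) + 1) = i + ((n + 1 : ℕ) : ℤ) := by push_cast; ring
        rwa [he] at h2
    have hmono : ∀ {i j : ℤ}, i ≤ j → I i ⊆ I j := by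
      intro i j hij X hX
      have hj : j = i + ((j - i).toNat : ℤ) := by omega
      rw [hj]
      exact hmonoNat _ i hX
    have hAJ : ∀ i : ℤ, AJ ι (DI H I) i = I i := by
      intro i
      ext X
      constructor
      · intro hX
        have h1 := hX i
        obtain ⟨e1⟩ := Hsh (ι.obj X) (-i) i 0 (by ring)
        obtain ⟨e0⟩ := Hzero (ι.obj X)
        exact (hserre i).mem_of_iso ((eιH.app X).symm ≪≫ e0.symm ≪≫ e1.symm) h1
      · intro hX j
        by_cases hj : j = i
        · subst hj
          obtain ⟨e1⟩ := Hsh (ι.obj X) (-j) j 0 (by ring)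
          obtain ⟨e0⟩ := Hzero (ι.obj X)
          exact (hserre j).mem_of_iso (e1 ≪≫ e0 ≪≫ eιH.app X) hX
        · obtain ⟨e1⟩ := Hsh (ι.obj X) (-i) j (j - i) (by ring)
          have hz : IsZero (H.obj ((ι.obj X)⟦j - i⟧)) := hιz _ (by omega) X
          exact (hserre j).mem_of_isZero (hz.of_iso e1)
    have hDIiso : ∀ ⦃X Y : D⦄, (X ≅ Y) → X ∈ DI H I → Y ∈ DI H I := by
      intro X Y e hX i
      exact (hserre i).mem_of_iso (H.mapIso ((shiftFunctor D i).mapIso e.symm)) (hX i)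
    have hDIshift : ∀ X : D, X ∈ DI H I → X⟦(-1 : ℤ)⟧ ∈ DI H I := by
      intro X hX i
      obtain ⟨e⟩ := Hsh X (-1) i (i - 1) (by ring)
      exact hmono (by omega) ((hserre (i - 1)).mem_of_iso e (hX (i - 1)))
    have hDIext : ∀ T : Triangle D, (T ∈ distTriang D) → T.obj₁ ∈ DI H I →
        T.obj₃ ∈ DI H I → T.obj₂ ∈ DI H I := by
      intro T hT h1 h3 i
      have hTi := Triangle.shift_distinguished T hT i
      have hex := H.map_distinguished_exact _ hTi
      exact (hserre i).mem_mid _ hex (h1 i) (h3 i)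
    have hDItrunc : ∀ (n : ℤ) (L : D), L ∈ DI H I →
        (τle n).obj L ∈ DI H I ∧ (τge n).obj L ∈ DI H I := by
      intro n L hL
      constructor
      · intro i
        rcases le_or_gt i n with h | h
        · obtain ⟨e⟩ := (hτle n i L).1 h
          exact (hserre i).mem_of_iso e (hL i)
        · exact (hserre i).mem_of_isZero ((hτle n i L).2 h)
      · intro i
        rcases le_or_gt n i with h | h
        · obtain ⟨e⟩ := (hτge n i L).1 h
          exact (hserre i).mem_of_iso e (hL i)
        · exact (hserre i).mem_of_isZero ((hτge n i L).2 h)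
    exact ⟨⟨hDIiso, hDIshift, hDIext, hDItrunc, fun i => (hAJ i) ▸ hserre i⟩, hAJ⟩
  · intro J hJ
    obtain ⟨hJiso, hJshift, hJext, hJtrunc, hJserre⟩ := hJ
    have hchain : IsGoodChain (AJ ι J) := by
      refine ⟨?_, hJserre⟩
      intro i X hX
      have h1 : ((ι.obj X)⟦(-i : ℤ)⟧)⟦(-1 : ℤ)⟧ ∈ J := hJshift _ hX
      have e : (ι.obj X)⟦(-(i + 1) : ℤ)⟧ ≅ ((ι.obj X)⟦(-i : ℤ)⟧)⟦(-1 : ℤ)⟧ :=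
        (shiftFunctorAdd' D (-i) (-1) (-(i + 1)) (by ring)).app (ι.obj X)
      exact hJiso e.symm h1
    have hconc : ∀ (n : ℤ) (L : D), (∀ i : ℤ, i ≠ n → IsZero (H.obj (L⟦i⟧))) →
        H.obj (L⟦n⟧) ∈ AJ ι J n → L ∈ J := by
      intro n L hz hm
      have hz' : ∀ i : ℤ, i ≠ 0 → IsZero (H.obj ((L⟦n⟧)⟦i⟧)) := by
        intro i hi
        obtain ⟨e⟩ := Hsh L n i (n + i) rfl
        exact (hz (n + i) (by omega)).of_iso e
      obtain ⟨X, ⟨e⟩⟩ := hheart (L⟦n⟧) hz'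
      have eX : X ≅ H.obj (L⟦n⟧) := (eιH.app X).symm ≪≫ H.mapIso e.symm
      have hX : X ∈ AJ ι J n := (hJserre n).mem_of_iso eX hm
      have eL : (ι.obj X)⟦(-n : ℤ)⟧ ≅ L :=
        (shiftFunctor D (-n)).mapIso e.symm ≪≫
          (shiftFunctorCompIsoId D n (-n) (by ring)).app L
      exact hJiso eL hX
    have hind : ∀ (k : ℕ) (a : ℤ) (L : D),
        (∀ i : ℤ, (i < a ∨ a + (k : ℤ) < i) → IsZero (H.obj (L⟦i⟧))) →
        (∀ i : ℤ, H.obj (L⟦i⟧) ∈ AJ ι J i) → L ∈ J := by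
      intro k
      induction k with
      | zero =>
        intro a L hz hm
        exact hconc a L (fun i hi => hz i (by omega)) (hm a)
      | succ n ih =>
        intro a L hz hm
        obtain ⟨T, hT, h1, h2, h3⟩ := htri a L
        have hobj1 : T.obj₁ ∈ J := by
          rw [h1]
          refine hconc a _ (fun i hi => ?_) ?_
          · rcases lt_or_ge a i with h | h
            · exact (hτle a i L).2 h
            · obtain ⟨e⟩ := (hτle a i L).1 h
              exact (hz i (by omega)).of_iso e
          · obtain ⟨e⟩ := (hτle a a L).1 le_rfl
            exact (hJserre a).mem_of_iso e (hm a)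
        have hobj3 : T.obj₃ ∈ J := by
          rw [h3]
          refine ih (a + 1) _ (fun i hi => ?_) (fun i => ?_)
          · rcases lt_or_ge i (a + 1) with h | h
            · exact (hτge (a + 1) i L).2 h
            · obtain ⟨e⟩ := (hτge (a + 1) i L).1 h
              exact (hz i (by omega)).of_iso e
          · rcases lt_or_ge i (a + 1) with h | h
            · exact (hJserre i).mem_of_isZero ((hτge (a + 1) i L).2 h)
            · obtain ⟨e⟩ := (hτge (a + 1) i L).1 h
              exact (hJserre i).mem_of_iso e (hm i)
        have := hJext T hT hobj1 hobj3
        rwa [h2] at this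
    have hDIJ : DI H (AJ ι J) = J := by
      ext L
      constructor
      · intro hL
        obtain ⟨a, b, hab⟩ := hbdd L
        exact hind (b - a).toNat a L (fun i hi => hab i (by omega)) hL
      · intro hL n
        set M := (τle n).obj ((τge n).obj L) with hM
        have hMJ : M ∈ J := (hJtrunc n _ ((hJtrunc n L hL).2)).1
        have hMz : ∀ i : ℤ, i ≠ 0 → IsZero (H.obj ((M⟦n⟧)⟦i⟧)) := by
          intro i hi
          obtain ⟨e⟩ := Hsh M n i (n + i) rfl
          refine IsZero.of_iso ?_ e
          rcases lt_or_ge n (n + i) with h | h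
          · exact (hτle n (n + i) _).2 h
          · obtain ⟨e2⟩ := (hτle n (n + i) _).1 h
            exact ((hτge n (n + i) L).2 (by omega)).of_iso e2
        obtain ⟨X, ⟨e⟩⟩ := hheart (M⟦n⟧) hMz
        obtain ⟨e1⟩ := (hτle n n _).1 le_rfl
        obtain ⟨e2⟩ := (hτge n n L).1 le_rfl
        have eX : H.obj (L⟦n⟧) ≅ X := (e1 ≪≫ e2).symm ≪≫ H.mapIso e ≪≫ eιH.app X
        have eJ : (ι.obj (H.obj (L⟦n⟧)))⟦(-n : ℤ)⟧ ≅ M :=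
          (shiftFunctor D (-n)).mapIso (ι.mapIso eX ≪≫ e.symm) ≪≫
            (shiftFunctorCompIsoId D n (-n) (by ring)).app M
        exact hJiso eJ.symm hMJ
    exact ⟨hchain, hDIJ⟩
end
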